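/- arXiv:math/0102131 — 7 statements merged into one kernel-verified Lean document; each statement's English description precedes it below -/
import Mathlib

section
/- Let A be a commutative unital complex normed algebra, α(x) monic of degree n over A, and t > 0 with ‖a_0‖ + ... + ‖a_{n-1}‖t^{n-1} ≤ t^n. Then the quotient seminorm on B = A[x]/(α(x)) induced by the weighted norm on A[x] is a genuine norm: for every coset with representative β(x) of degree < n, the quotient seminorm of the coset equals ‖β(x)‖ = Σ_{k<n} ‖b_k‖ t^k. -/
open Polynomial

/-- The Arens–Hoffman weighted norm on `A[x]`:
`‖Σ_{k=0}^p c_k x^k‖ := Σ_{k=0}^p ‖c_k‖ t^k`. -/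
noncomputable def ahNorm {A : Type*} [NormedCommRing A] (t : ℝ) (p : Polynomial A) : ℝ :=
  ∑ k ∈ Finset.range (p.natDegree + 1), ‖p.coeff k‖ * t ^ k

/-- The quotient seminorm on `A[x]⧸I` induced by the weighted norm:
the infimum of the weighted norms over all representatives of the coset. -/
noncomputable def ahQuotNorm {A : Type*} [NormedCommRing A] (t : ℝ)
    (I : Ideal (Polynomial A)) (b : Polynomial A ⧸ I) : ℝ :=
  sInf (ahNorm t '' {p : Polynomial A | Ideal.Quotient.mk I p = b})

section Aux

variable {A : Type*} [NormedCommRing A] {t : ℝ}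

lemma ahNorm_eq_sum (t : ℝ) (p : Polynomial A) {N : ℕ} (hN : p.natDegree < N) :
    ahNorm t p = ∑ k ∈ Finset.range N, ‖p.coeff k‖ * t ^ k := by
  unfold ahNorm
  refine Finset.sum_subset (Finset.range_subset_range.mpr hN) ?_
  intro k hk hk'
  simp only [Finset.mem_range] at hk hk'
  have : p.natDegree < k := by omega
  simp [Polynomial.coeff_eq_zero_of_natDegree_lt this]

lemma ahNorm_eq_sum_of_degree_lt (t : ℝ) (p : Polynomial A) {N : ℕ}
    (hN : p.degree < (N : WithBot ℕ)) :
    ahNorm t p = ∑ k ∈ Finset.range N, ‖p.coeff k‖ * t ^ k := by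
  rcases eq_or_ne p 0 with rfl | hp
  · simp [ahNorm]
  · exact ahNorm_eq_sum t p ((Polynomial.natDegree_lt_iff_degree_lt hp).mpr hN)

lemma ahNorm_nonneg (ht : 0 ≤ t) (p : Polynomial A) : 0 ≤ ahNorm t p :=
  Finset.sum_nonneg fun k _ => mul_nonneg (norm_nonneg _) (pow_nonneg ht k)

lemma ahNorm_add_le (ht : 0 ≤ t) (p q : Polynomial A) :
    ahNorm t (p + q) ≤ ahNorm t p + ahNorm t q := by
  set N := max p.natDegree q.natDegree + 1 with hNdef
  have h1 : (p + q).natDegree < N :=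
    lt_of_le_of_lt (Polynomial.natDegree_add_le p q) (by omega)
  rw [ahNorm_eq_sum t _ h1, ahNorm_eq_sum t p (N := N) (by omega),
    ahNorm_eq_sum t q (N := N) (by omega), ← Finset.sum_add_distrib]
  refine Finset.sum_le_sum fun k _ => ?_
  rw [Polynomial.coeff_add, ← add_mul]
  exact mul_le_mul_of_nonneg_right (norm_add_le _ _) (pow_nonneg ht k)

lemma ahNorm_neg (p : Polynomial A) : ahNorm t (-p) = ahNorm t p := by
  simp [ahNorm]

lemma ahNorm_mul_le (ht : 0 ≤ t) (p q : Polynomial A) :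
    ahNorm t (p * q) ≤ ahNorm t p * ahNorm t q := by
  set M := p.natDegree + q.natDegree + 1 with hM
  have hpq : (p * q).natDegree < M :=
    lt_of_le_of_lt (Polynomial.natDegree_mul_le) (by omega)
  rw [ahNorm_eq_sum t _ hpq, ahNorm_eq_sum t p (N := M) (by omega),
    ahNorm_eq_sum t q (N := M) (by omega)]
  set F : ℕ × ℕ → ℝ := fun x => (‖p.coeff x.1‖ * t ^ x.1) * (‖q.coeff x.2‖ * t ^ x.2) with hF
  have step1 : ∑ k ∈ Finset.range M, ‖(p * q).coeff k‖ * t ^ k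
      ≤ ∑ k ∈ Finset.range M, ∑ x ∈ Finset.HasAntidiagonal.antidiagonal k, F x := by
    refine Finset.sum_le_sum fun k _ => ?_
    rw [Polynomial.coeff_mul]
    calc ‖∑ x ∈ Finset.HasAntidiagonal.antidiagonal k, p.coeff x.1 * q.coeff x.2‖ * t ^ k
        ≤ (∑ x ∈ Finset.HasAntidiagonal.antidiagonal k, ‖p.coeff x.1‖ * ‖q.coeff x.2‖) * t ^ k := by
          refine mul_le_mul_of_nonneg_right ?_ (pow_nonneg ht k)
          exact (norm_sum_le _ _).trans (Finset.sum_le_sum fun x _ => norm_mul_le _ _)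
      _ = ∑ x ∈ Finset.HasAntidiagonal.antidiagonal k, F x := by
          rw [Finset.sum_mul]
          refine Finset.sum_congr rfl fun x hx => ?_
          have hx' : x.1 + x.2 = k := Finset.HasAntidiagonal.mem_antidiagonal.mp hx
          rw [hF]
          simp only
          rw [← hx', pow_add]
          ring
  refine step1.trans ?_
  have hdisj : (↑(Finset.range M) : Set ℕ).PairwiseDisjoint Finset.HasAntidiagonal.antidiagonal := by
    intro i _ j _ hij
    simp only [Function.onFun]
    rw [Finset.disjoint_left]
    intro x hxi hxj
    exact hij ((Finset.HasAntidiagonal.mem_antidiagonal.mp hxi).symm.trans (Finset.HasAntidiagonal.mem_antidiagonal.mp hxj))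
  rw [← Finset.sum_biUnion hdisj]
  have hsub : (Finset.range M).biUnion Finset.HasAntidiagonal.antidiagonal ⊆
      Finset.range M ×ˢ Finset.range M := by
    intro x hx
    obtain ⟨k, hk, hxk⟩ := Finset.mem_biUnion.mp hx
    have hx' : x.1 + x.2 = k := Finset.HasAntidiagonal.mem_antidiagonal.mp hxk
    simp only [Finset.mem_range] at hk
    refine Finset.mem_product.mpr ⟨Finset.mem_range.mpr (by omega), Finset.mem_range.mpr (by omega)⟩
  calc ∑ x ∈ (Finset.range M).biUnion Finset.HasAntidiagonal.antidiagonal, F x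
      ≤ ∑ x ∈ Finset.range M ×ˢ Finset.range M, F x := by
        refine Finset.sum_le_sum_of_subset_of_nonneg hsub fun x _ _ => ?_
        exact mul_nonneg (mul_nonneg (norm_nonneg _) (pow_nonneg ht _))
          (mul_nonneg (norm_nonneg _) (pow_nonneg ht _))
    _ = (∑ k ∈ Finset.range M, ‖p.coeff k‖ * t ^ k) *
        (∑ k ∈ Finset.range M, ‖q.coeff k‖ * t ^ k) := by
        rw [Finset.sum_mul_sum, ← Finset.sum_product']

lemma ahNorm_mul_X_pow_add (ht : 0 ≤ t) (γ β : Polynomial A) {n : ℕ}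
    (hβ : β.natDegree < n) :
    ahNorm t (γ * X ^ n + β) = ahNorm t γ * t ^ n + ahNorm t β := by
  set G := γ.natDegree + 1 with hG
  have hd : (γ * X ^ n + β).natDegree < n + G := by
    refine lt_of_le_of_lt (Polynomial.natDegree_add_le _ _) ?_
    have h1 : (γ * X ^ n).natDegree ≤ γ.natDegree + n := by
      refine le_trans Polynomial.natDegree_mul_le ?_
      exact Nat.add_le_add_left (Polynomial.natDegree_X_pow_le (R := A) n) _
    omega
  rw [ahNorm_eq_sum t _ hd, Finset.sum_range_add]
  have h1 : ∑ i ∈ Finset.range n, ‖(γ * X ^ n + β).coeff i‖ * t ^ i = ahNorm t β := by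
    rw [ahNorm_eq_sum t β hβ]
    refine Finset.sum_congr rfl fun k hk => ?_
    simp only [Finset.mem_range] at hk
    rw [Polynomial.coeff_add, Polynomial.coeff_mul_X_pow', if_neg (by omega), zero_add]
  have h2 : ∑ i ∈ Finset.range G, ‖(γ * X ^ n + β).coeff (n + i)‖ * t ^ (n + i)
      = ahNorm t γ * t ^ n := by
    rw [ahNorm]
    rw [Finset.sum_mul]
    refine Finset.sum_congr rfl fun k hk => ?_
    rw [Polynomial.coeff_add, Polynomial.coeff_mul_X_pow', if_pos (by omega),
      Polynomial.coeff_eq_zero_of_natDegree_lt (by omega : β.natDegree < n + k), add_zero]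
    have : n + k - n = k := by omega
    rw [this, pow_add]
    ring
  rw [h1, h2, add_comm]

end Aux

/-- Let `A` be a commutative unital complex normed algebra, `α(x)` monic of degree `n`
over `A`, and `t > 0` with `‖a₀‖ + ⋯ + ‖a_{n-1}‖t^{n-1} ≤ t^n`.  Then the quotient
seminorm on `B = A[x]/(α(x))` induced by the weighted norm on `A[x]` is a genuine norm:
for every coset with representative `β(x)` of degree `< n`, the quotient seminorm of the
coset equals `‖β(x)‖ = Σ_{k<n} ‖b_k‖ t^k`. -/
theorem ahQuotNorm_eq_of_degree_lt {A : Type*} [NormedCommRing A] [NormedAlgebra ℂ A]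
    [NormOneClass A] (α : Polynomial A) (hα : α.Monic) (n : ℕ) (hn : α.natDegree = n)
    (hdeg : 0 < n) (t : ℝ) (ht : 0 < t)
    (hparam : ∑ k ∈ Finset.range n, ‖α.coeff k‖ * t ^ k ≤ t ^ n)
    (β : Polynomial A) (hβ : β.degree < (n : WithBot ℕ)) :
    ahQuotNorm t (Ideal.span {α}) (Ideal.Quotient.mk (Ideal.span {α}) β) = ahNorm t β := by
  haveI : Nontrivial A := ⟨⟨1, 0, fun h => by
    have h1 := (norm_one : ‖(1 : A)‖ = 1)
    rw [h, norm_zero] at h1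
    exact zero_ne_one h1⟩⟩
  have hβn : β.natDegree < n := by
    rcases eq_or_ne β 0 with rfl | hb
    · simpa using hdeg
    · exact (Polynomial.natDegree_lt_iff_degree_lt hb).mpr hβ
  -- the remainder polynomial α - Xⁿ
  have hα0 : α ≠ 0 := hα.ne_zero
  have hdegα : α.degree = (n : WithBot ℕ) := by
    rw [Polynomial.degree_eq_natDegree hα0, hn]
  have hr : (α - X ^ n).degree < (n : WithBot ℕ) := by
    have := Polynomial.degree_sub_lt (q := X ^ n)
      (by rw [hdegα, Polynomial.degree_X_pow]) hα0
      (by rw [hα.leadingCoeff, Polynomial.leadingCoeff_X_pow])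
    rwa [hdegα] at this
  have hrnorm : ahNorm t (α - X ^ n) ≤ t ^ n := by
    rw [ahNorm_eq_sum_of_degree_lt t _ hr]
    refine le_trans (le_of_eq ?_) hparam
    refine Finset.sum_congr rfl fun k hk => ?_
    simp only [Finset.mem_range] at hk
    rw [Polynomial.coeff_sub, Polynomial.coeff_X_pow, if_neg (by omega), sub_zero]
  have key : ∀ γ : Polynomial A, ahNorm t β ≤ ahNorm t (γ * α + β) := by
    intro γ
    have hshift : ahNorm t (γ * X ^ n + β) = ahNorm t γ * t ^ n + ahNorm t β :=
      ahNorm_mul_X_pow_add ht.le γ β hβn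
    have hdecomp : γ * X ^ n + β = (γ * α + β) + -(γ * (α - X ^ n)) := by ring
    have h1 : ahNorm t (γ * X ^ n + β) ≤ ahNorm t (γ * α + β) + ahNorm t γ * t ^ n := by
      rw [hdecomp]
      refine le_trans (ahNorm_add_le ht.le _ _) ?_
      rw [ahNorm_neg]
      refine add_le_add_right ?_ _
      refine le_trans (ahNorm_mul_le ht.le _ _) ?_
      exact mul_le_mul_of_nonneg_left hrnorm (ahNorm_nonneg ht.le γ)
    linarith [hshift ▸ h1]
  unfold ahQuotNorm
  apply le_antisymm
  · refine csInf_le ⟨0, ?_⟩ ⟨β, rfl, rfl⟩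
    rintro y ⟨p, -, rfl⟩
    exact ahNorm_nonneg ht.le p
  · refine le_csInf ⟨ahNorm t β, β, rfl, rfl⟩ ?_
    rintro y ⟨p, hp, rfl⟩
    have hmem : p - β ∈ Ideal.span {α} := by
      rw [← Ideal.Quotient.eq]
      exact hp
    obtain ⟨γ, hγ⟩ := Ideal.mem_span_singleton'.mp hmem
    have hpe : p = γ * α + β := by linear_combination -hγ
    rw [hpe]
    exact key γ
end

section
/- Let A be a commutative unital complex normed algebra with A[x] carrying the Arens-Hoffman type norm ‖Σ c_k x^k‖ = Σ ‖c_k‖ t^k for fixed t > 0. For each continuous character h on A and each λ ∈ ℂ with |λ| ≤ t, the map γ(x) = Σ c_k x^k ↦ Σ h(c_k) λ^k is a continuous character on A[x], and the map (h, λ) ↦ this character is a homeomorphism from Ω(A) × Δ_t onto Ω(A[x]), where Ω denotes the space of continuous characters with the weak-* topology and Δ_t is the closed disc of radius t in ℂ. -/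
open Polynomial WeakDual

/-- The continuous characters of `A[x]` for the Arens–Hoffman norm with parameter `t`:
unital `ℂ`-algebra homomorphisms `A[x] → ℂ` that are bounded with respect to the weighted
norm `ahNorm t`, regarded as a set of functions `A[x] → ℂ` (so carrying the topology of
pointwise convergence, i.e. the weak-* topology). -/
def ahCharSet (A : Type*) [NormedCommRing A] [NormedAlgebra ℂ A] (t : ℝ) :
    Set (Polynomial A → ℂ) :=
  {H | (∃ φ : Polynomial A →ₐ[ℂ] ℂ, ⇑φ = H) ∧
       ∃ C > (0 : ℝ), ∀ p : Polynomial A, ‖H p‖ ≤ C * ahNorm t p}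

/-- Continuous characters on a unital normed algebra are norm-decreasing. -/
lemma ah_char_norm_apply_le {A : Type*} [NormedCommRing A] [NormedAlgebra ℂ A]
    (h : characterSpace ℂ A) (a : A) : ‖h a‖ ≤ ‖a‖ := by
  by_contra hlt
  push_neg at hlt
  have hpos : 0 < ‖h a‖ := lt_of_le_of_lt (norm_nonneg a) hlt
  set r : ℝ := ‖a‖ / ‖h a‖ with hr
  have hr1 : r < 1 := (div_lt_one hpos).2 hlt
  have hr0 : 0 ≤ r := div_nonneg (norm_nonneg a) hpos.le
  set M : ℝ := ‖toStrongDual (h : WeakDual ℂ A)‖ with hM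
  have key : ∀ n : ℕ, 0 < n → 1 ≤ M * r ^ n := by
    intro n hn
    have h1 : ‖h a‖ ^ n = ‖h (a ^ n)‖ := by rw [map_pow, norm_pow]
    have h2 : ‖h (a ^ n)‖ ≤ M * ‖a ^ n‖ := ContinuousLinearMap.le_opNorm _ _
    have h3 : ‖a ^ n‖ ≤ ‖a‖ ^ n := norm_pow_le' a hn
    have h4 : ‖h a‖ ^ n ≤ M * ‖a‖ ^ n := by
      calc ‖h a‖ ^ n = ‖h (a ^ n)‖ := h1
        _ ≤ M * ‖a ^ n‖ := h2
        _ ≤ M * ‖a‖ ^ n := by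
            have hM0 : 0 ≤ M := norm_nonneg _
            exact mul_le_mul_of_nonneg_left h3 hM0
    have hpow : 0 < ‖h a‖ ^ n := pow_pos hpos n
    calc (1:ℝ) ≤ M * ‖a‖ ^ n / ‖h a‖ ^ n := (one_le_div hpow).2 h4
      _ = M * r ^ n := by rw [hr, div_pow, mul_div_assoc]
  have hlim : Filter.Tendsto (fun n : ℕ => M * r ^ n) Filter.atTop (nhds 0) := by
    have := tendsto_pow_atTop_nhds_zero_of_lt_one hr0 hr1
    simpa using this.const_mul M
  have : ∀ᶠ n : ℕ in Filter.atTop, M * r ^ n < 1 := hlim.eventually_lt_const one_pos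
  rcases (this.and (Filter.eventually_gt_atTop 0)).exists with ⟨n, hn1, hn2⟩
  exact absurd (key n hn2) (not_le.2 hn1)

lemma ah_compactSpace {A : Type*} [NormedCommRing A] [NormedAlgebra ℂ A] :
    CompactSpace (characterSpace ℂ A) := by
  rw [← isCompact_iff_compactSpace]
  have h : characterSpace ℂ A ⊆ toStrongDual ⁻¹' Metric.closedBall 0 1 := by
    intro φ hφ
    rw [Set.mem_preimage, mem_closedBall_zero_iff]
    exact ContinuousLinearMap.opNorm_le_bound _ zero_le_one fun a => by
      rw [one_mul]; exact ah_char_norm_apply_le (⟨φ, hφ⟩ : characterSpace ℂ A) a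
  exact (WeakDual.isCompact_closedBall (𝕜 := ℂ) 0 1).of_isClosed_subset CharacterSpace.isClosed h

lemma ahNorm_C {A : Type*} [NormedCommRing A] (t : ℝ) (a : A) :
    ahNorm t (Polynomial.C a) = ‖a‖ := by
  simp [ahNorm]

lemma ahNorm_X_pow {A : Type*} [NormedCommRing A] [NormOneClass A] [Nontrivial A]
    (t : ℝ) (n : ℕ) : ahNorm t ((Polynomial.X : Polynomial A) ^ n) = t ^ n := by
  unfold ahNorm
  rw [Polynomial.natDegree_X_pow]
  rw [Finset.sum_eq_single n]
  · simp
  · intro k _ hk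
    simp [Polynomial.coeff_X_pow, hk]
  · intro hmem
    exact absurd (Finset.self_mem_range_succ n) hmem

/-- Let `A` be a commutative unital complex normed algebra with `A[x]` carrying the
Arens–Hoffman type norm `‖Σ c_k x^k‖ = Σ ‖c_k‖ t^k` for fixed `t > 0`.  For each continuous
character `h` on `A` and each `λ ∈ ℂ` with `|λ| ≤ t`, the map
`γ(x) = Σ c_k x^k ↦ Σ h(c_k) λ^k` is a continuous character on `A[x]`; and the map
`(h, λ) ↦ this character` is a homeomorphism from `Ω(A) × Δ_t` onto `Ω(A[x])`, where `Ω`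
denotes the space of continuous characters with the weak-* topology and `Δ_t` is the closed
disc of radius `t` in `ℂ`. -/
theorem ahCharSet_homeomorph (A : Type*) [NormedCommRing A] [NormedAlgebra ℂ A]
    [NormOneClass A] (t : ℝ) (ht : 0 < t) :
    (∀ (h : characterSpace ℂ A) (lam : ℂ), ‖lam‖ ≤ t →
      (fun p : Polynomial A =>
        ∑ k ∈ Finset.range (p.natDegree + 1), h (p.coeff k) * lam ^ k) ∈ ahCharSet A t) ∧
    ∃ e : (characterSpace ℂ A × Metric.closedBall (0 : ℂ) t) ≃ₜ ahCharSet A t,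
      ∀ (h : characterSpace ℂ A) (lam : Metric.closedBall (0 : ℂ) t) (p : Polynomial A),
        (e (h, lam) : Polynomial A → ℂ) p =
          ∑ k ∈ Finset.range (p.natDegree + 1), h (p.coeff k) * (lam : ℂ) ^ k := by
  haveI : Nontrivial A := ⟨1, 0, fun h => by simpa [h] using (norm_one : ‖(1:A)‖ = 1)⟩
  -- forward membership
  have hmem : ∀ (h : characterSpace ℂ A) (lam : ℂ), ‖lam‖ ≤ t →
      (fun p : Polynomial A =>
        ∑ k ∈ Finset.range (p.natDegree + 1), h (p.coeff k) * lam ^ k) ∈ ahCharSet A t := by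
    intro h lam hlam
    constructor
    · refine ⟨Polynomial.aevalTower (CharacterSpace.toAlgHom h) lam, ?_⟩
      funext p
      exact Polynomial.eval₂_eq_sum_range _ _
    · refine ⟨1, one_pos, fun p => ?_⟩
      rw [one_mul]
      calc ‖∑ k ∈ Finset.range (p.natDegree + 1), h (p.coeff k) * lam ^ k‖
          ≤ ∑ k ∈ Finset.range (p.natDegree + 1), ‖h (p.coeff k) * lam ^ k‖ :=
            norm_sum_le _ _
        _ ≤ ahNorm t p := by
            refine Finset.sum_le_sum fun k _ => ?_
            rw [norm_mul, norm_pow]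
            exact mul_le_mul (ah_char_norm_apply_le h _)
              (pow_le_pow_left₀ (norm_nonneg _) hlam k)
              (pow_nonneg (norm_nonneg _) k) (norm_nonneg _)
  refine ⟨hmem, ?_⟩
  -- the forward map
  set F : characterSpace ℂ A × Metric.closedBall (0 : ℂ) t → ahCharSet A t :=
    fun x => ⟨fun p => ∑ k ∈ Finset.range (p.natDegree + 1), x.1 (p.coeff k) * (x.2 : ℂ) ^ k,
      hmem x.1 x.2 (mem_closedBall_zero_iff.mp x.2.2)⟩ with hF
  -- evaluation formulas
  have evalC : ∀ (h : characterSpace ℂ A) (lam : ℂ) (a : A),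
      (∑ k ∈ Finset.range ((Polynomial.C a).natDegree + 1),
        h ((Polynomial.C a).coeff k) * lam ^ k) = h a := by
    intro h lam a
    simp
  have evalX : ∀ (h : characterSpace ℂ A) (lam : ℂ),
      (∑ k ∈ Finset.range ((Polynomial.X : Polynomial A).natDegree + 1),
        h ((Polynomial.X : Polynomial A).coeff k) * lam ^ k) = lam := by
    intro h lam
    rw [Polynomial.natDegree_X]
    simp [Finset.sum_range_succ]
  have hinj : Function.Injective F := by
    intro x y hxy
    have heq : ∀ p, (F x : Polynomial A → ℂ) p = (F y : Polynomial A → ℂ) p := by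
      intro p; rw [hxy]
    have h1 : x.1 = y.1 := by
      apply CharacterSpace.ext
      intro a
      have := heq (Polynomial.C a)
      simpa [hF, evalC] using this
    have h2 : x.2 = y.2 := by
      have := heq Polynomial.X
      apply Subtype.ext
      simpa [hF, Polynomial.natDegree_X, Finset.sum_range_succ] using this
    exact Prod.ext h1 h2
  have hsurj : Function.Surjective F := by
    rintro ⟨H, ⟨φ, hφ⟩, C0, hC0, hbd⟩
    -- the character on A
    have hbdA : ∀ a : A, ‖(φ.comp Polynomial.CAlgHom) a‖ ≤ C0 * ‖a‖ := by
      intro a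
      have := hbd (Polynomial.C a)
      rw [← hφ, ahNorm_C] at this
      simpa using this
    set h0 : A →ₗ[ℂ] ℂ := (φ.comp Polynomial.CAlgHom).toLinearMap with hh0
    set hc : WeakDual ℂ A := LinearMap.mkContinuous h0 C0 hbdA with hhc
    have hc_apply : ∀ a : A, hc a = φ (Polynomial.C a) := fun a => rfl
    have hc_mem : hc ∈ characterSpace ℂ A := by
      constructor
      · intro hzero
        have : hc 1 = 0 := by rw [hzero]; rfl
        rw [hc_apply, map_one, map_one] at this
        exact one_ne_zero this
      · intro x y
        rw [hc_apply, hc_apply, hc_apply, map_mul, map_mul]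
    set hch : characterSpace ℂ A := ⟨hc, hc_mem⟩ with hhch
    -- the point lam
    set lam : ℂ := φ Polynomial.X with hlam
    have hlam_le : ‖lam‖ ≤ t := by
      have key : ∀ n : ℕ, ‖lam‖ ^ n ≤ C0 * t ^ n := by
        intro n
        have := hbd (Polynomial.X ^ n)
        rw [← hφ, ahNorm_X_pow, map_pow, norm_pow] at this
        exact this
      by_contra hlt
      push_neg at hlt
      set r : ℝ := ‖lam‖ / t with hr
      have hr1 : 1 < r := (one_lt_div ht).2 hlt
      have hrk : ∀ n : ℕ, r ^ n ≤ C0 := by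
        intro n
        rw [hr, div_pow, div_le_iff₀ (pow_pos ht n)]
        exact key n
      have := tendsto_pow_atTop_atTop_of_one_lt hr1
      rcases (this.eventually_gt_atTop C0).exists with ⟨n, hn⟩
      exact absurd (hrk n) (not_le.2 hn)
    refine ⟨(hch, ⟨lam, mem_closedBall_zero_iff.mpr hlam_le⟩), ?_⟩
    apply Subtype.ext
    funext p
    show (∑ k ∈ Finset.range (p.natDegree + 1), hch (p.coeff k) * lam ^ k) = H p
    rw [← hφ]
    conv_rhs => rw [p.as_sum_range, map_sum]
    refine Finset.sum_congr rfl fun k _ => ?_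
    rw [← Polynomial.C_mul_X_pow_eq_monomial, map_mul, map_pow]
    rfl
  -- topology
  haveI : CompactSpace (characterSpace ℂ A) := ah_compactSpace
  haveI : CompactSpace (Metric.closedBall (0 : ℂ) t) :=
    isCompact_iff_compactSpace.mp (isCompact_closedBall 0 t)
  have hcont : Continuous F := by
    apply Continuous.subtype_mk
    apply continuous_pi
    intro p
    apply continuous_finset_sum
    intro k _
    refine Continuous.mul ?_ ?_
    · exact (WeakDual.eval_continuous (p.coeff k)).comp
        (continuous_subtype_val.comp continuous_fst)
    · exact (continuous_subtype_val.comp continuous_snd).pow k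
  refine ⟨(Continuous.homeoOfEquivCompactToT2 (f := Equiv.ofBijective F ⟨hinj, hsurj⟩) hcont),
    fun h lam p => rfl⟩
end

section
/- Let R be a commutative ring with unity, n ≥ 2, and α(x) = x^n + a_0 ∈ R[x]. Then discr(α) = n^n · a_0^{n-1}. -/
open Polynomial

/-- The `(2n−1) × (2n−1)` Sylvester-type matrix of a polynomial `f` (thought of as having
degree `n`) and its formal derivative `f′`, with the top-left leading coefficient replaced
by `1` (for monic `f` this replacement is vacuous).  The first `n − 1` rows carry the
coefficients of `f` (shifted), the last `n` rows carry those of `f′`.  Its determinant is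
the discriminant `discr f`. -/
noncomputable def discrMatrix {R : Type*} [CommRing R] (n : ℕ) (f : Polynomial R) :
    Matrix (Fin (2 * n - 1)) (Fin (2 * n - 1)) R := fun i j =>
  if (i : ℕ) < n - 1 then
    -- rows of `f`: row `i` has `a_n, a_{n-1}, …, a_0` in columns `i, i+1, …, i+n`,
    -- with the top-left `a_n` replaced by `1`
    (if (i : ℕ) ≤ (j : ℕ) ∧ (j : ℕ) ≤ (i : ℕ) + n then
      (if (i : ℕ) = 0 ∧ (j : ℕ) = 0 then 1 else f.coeff (n - ((j : ℕ) - (i : ℕ)))) else 0)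
  else
    -- rows of `f′`: row `n−1+i′` has the coefficients of `f′` in columns `i′, …, i′+n−1`
    (if (i : ℕ) - (n - 1) ≤ (j : ℕ) ∧ (j : ℕ) ≤ (i : ℕ) - (n - 1) + (n - 1) then
      (derivative f).coeff ((n - 1) - ((j : ℕ) - ((i : ℕ) - (n - 1)))) else 0)

open Fin.NatCast in
lemma finRotate_pow_apply {N : ℕ} (k : ℕ) (i : Fin (N + 1)) :
    ((finRotate (N + 1)) ^ k) i = i + (k : Fin (N + 1)) := by
  induction k generalizing i with
  | zero => simp
  | succ k ih =>
    rw [pow_succ, Equiv.Perm.mul_apply, finRotate_succ_apply, ih]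
    push_cast
    abel

/-- Let `R` be a commutative ring with unity, `n ≥ 2`, and `α(x) = x^n + a₀ ∈ R[x]`.
Then `discr α = n^n • a₀^(n-1)`. -/
theorem discr_pow_add_const {R : Type*} [CommRing R] (n : ℕ) (hn : 2 ≤ n) (a₀ : R) :
    (discrMatrix n (X ^ n + C a₀)).det = (n : R) ^ n * a₀ ^ (n - 1) := by
  have hN : 2 * n - 1 = (2 * n - 2) + 1 := by omega
  set M := discrMatrix n (X ^ n + C a₀) with hM
  let e : Fin (2 * n - 2 + 1) ≃ Fin (2 * n - 1) := finCongr hN.symm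
  let σ : Equiv.Perm (Fin (2 * n - 1)) := e.permCongr ((finRotate (2 * n - 2 + 1)) ^ n)
  have hσ : ∀ i : Fin (2 * n - 1), (σ i : ℕ) =
      if (i : ℕ) < n - 1 then (i : ℕ) + n else (i : ℕ) - (n - 1) := by
    intro i
    have h1 : (σ i : ℕ) = (((i : ℕ) % (2 * n - 2 + 1)) + n % (2 * n - 2 + 1)) % (2 * n - 2 + 1) := by
      simp [σ, e, Equiv.permCongr_apply, finRotate_pow_apply, Fin.add_def]
    rw [h1, Nat.mod_eq_of_lt (a := (i : ℕ)) (by omega), Nat.mod_eq_of_lt (a := n) (by omega)]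
    split
    · exact Nat.mod_eq_of_lt (by omega)
    · rw [Nat.mod_eq_sub_mod (by omega), Nat.mod_eq_of_lt (by omega)]
      omega
  have hsign : Equiv.Perm.sign σ = 1 := by
    have : (2 : ℕ) * n - 2 = 2 * (n - 1) := by omega
    simp only [σ, Equiv.Perm.sign_permCongr, map_pow, sign_finRotate, Nat.add_sub_cancel, this, pow_mul, neg_one_sq,
      one_pow]
  -- coefficient computations
  have hf : ∀ k : ℕ, (X ^ n + C a₀ : R[X]).coeff k =
      if k = n then 1 else if k = 0 then a₀ else 0 := by
    intro k
    simp only [coeff_add, coeff_X_pow, coeff_C]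
    split_ifs with h1 h2
    · exfalso; omega
    · exact add_zero 1
    · exact zero_add a₀
    · exact add_zero 0
  have hd : ∀ k : ℕ, (derivative (X ^ n + C a₀ : R[X])).coeff k =
      if k = n - 1 then (n : R) else 0 := by
    intro k
    simp [derivative_X_pow, coeff_X_pow, mul_comm]
  have hdiag : ∀ i : Fin (2 * n - 1), M i (σ i) =
      if (i : ℕ) < n - 1 then a₀ else (n : R) := by
    intro i
    simp only [hM, discrMatrix, hσ i]
    split_ifs with h1 h2 h3 h4 <;> first
      | omega
      | (rw [hf]; split_ifs <;> first | omega | rfl)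
      | (rw [hd]; split_ifs <;> first | omega | rfl)
  have hzero : (M.submatrix id σ).BlockTriangular id := by
    intro i j hij
    have hij' : (j : ℕ) < (i : ℕ) := hij
    simp only [Matrix.submatrix_apply, id_eq, hM, discrMatrix, hσ j]
    split_ifs with h1 h2 h3 h4 h5 <;> first
      | rfl
      | omega
      | (rw [hf]; split_ifs <;> first | omega | rfl)
      | (rw [hd]; split_ifs <;> first | omega | rfl)
  have h1 : (M.submatrix id σ).det = M.det := by
    rw [Matrix.det_permute', hsign]
    simp
  rw [← h1, Matrix.det_of_upperTriangular hzero]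
  have : ∀ i : Fin (2 * n - 1), (M.submatrix id σ) i i =
      (fun k : ℕ => if k < n - 1 then a₀ else (n : R)) (i : ℕ) := by
    intro i
    simp only [Matrix.submatrix_apply, id_eq, hdiag i]
  rw [Finset.prod_congr rfl fun i _ => this i,
    Fin.prod_univ_eq_prod_range (fun k : ℕ => if k < n - 1 then a₀ else (n : R)) (2 * n - 1)]
  have h2 : 2 * n - 1 = (n - 1) + n := by omega
  rw [h2, Finset.prod_range_add]
  have ha : ∀ x ∈ Finset.range (n - 1),
      (if x < n - 1 then a₀ else (n : R)) = a₀ := by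
    intro x hx
    rw [if_pos (Finset.mem_range.mp hx)]
  have hb : ∀ x ∈ Finset.range n,
      (if (n - 1) + x < n - 1 then a₀ else (n : R)) = (n : R) := by
    intro x _
    rw [if_neg (by omega)]
  rw [Finset.prod_congr rfl ha, Finset.prod_congr rfl hb, Finset.prod_const, Finset.prod_const]
  simp [mul_comm]
end

section
/- Let A be a tractable commutative unital complex normed algebra and α(x) = x^n + a_0 with n ≥ 2, where a_0 is a zero divisor in A (i.e., there exists a ≠ 0 with a·a_0 = 0). Then the Arens-Hoffman extension B = A[x]/(α(x)) is not tractable: the element a·x̄ is a nonzero element in the kernel of every continuous character of B. -/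
open Polynomial

/-- Let `A` be a tractable commutative unital complex normed algebra and
`α(x) = x^n + a₀` with `n ≥ 2`, where `a₀` is a zero divisor in `A` (there is `a ≠ 0` with
`a·a₀ = 0`).  Then the Arens–Hoffman extension `B = A[x]/(α(x))` is not tractable: the
element `a·x̄` is a nonzero element of `B` lying in the kernel of every continuous character
of `B`. -/
theorem ahQuot_not_tractable_of_zero_divisor (A : Type*) [NormedCommRing A]
    [NormedAlgebra ℂ A] [NormOneClass A]
    (htract : {x : A | ∀ I : Ideal A, I.IsMaximal → IsClosed (I : Set A) → x ∈ I} = {0})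
    (n : ℕ) (hn : 2 ≤ n) (a₀ a : A) (ha : a ≠ 0) (hzd : a * a₀ = 0)
    (t : ℝ) (ht : 0 < t)
    (hparam : ∑ k ∈ Finset.range n,
        ‖(X ^ n + C a₀ : Polynomial A).coeff k‖ * t ^ k ≤ t ^ n) :
    Ideal.Quotient.mk (Ideal.span {(X ^ n + C a₀ : Polynomial A)}) (C a * X) ≠ 0 ∧
    ∀ φ : (Polynomial A ⧸ Ideal.span {(X ^ n + C a₀ : Polynomial A)}) →ₐ[ℂ] ℂ,
      (∃ C₀ > (0 : ℝ), ∀ b, ‖φ b‖ ≤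
          C₀ * ahQuotNorm t (Ideal.span {(X ^ n + C a₀ : Polynomial A)}) b) →
      φ (Ideal.Quotient.mk (Ideal.span {(X ^ n + C a₀ : Polynomial A)}) (C a * X)) = 0 := by
  haveI : Nontrivial A := nontrivial_of_ne a 0 ha
  constructor
  · intro h
    rw [Ideal.Quotient.eq_zero_iff_mem, Ideal.mem_span_singleton] at h
    obtain ⟨q, hq⟩ := h
    have hmonic : (X ^ n + C a₀ : Polynomial A).Monic := by
      apply Polynomial.monic_X_pow_add_C
      omega
    have hCaX : (C a * X : Polynomial A) ≠ 0 := by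
      intro h0
      have : (C a * X : Polynomial A).coeff 1 = a := by simp
      rw [h0] at this
      simp at this
      exact ha this.symm
    have hq0 : q ≠ 0 := by
      rintro rfl
      simp at hq
      exact ha hq
    have hdeg : ((X ^ n + C a₀ : Polynomial A) * q).natDegree = n + q.natDegree := by
      rw [hmonic.natDegree_mul' hq0, Polynomial.natDegree_X_pow_add_C]
    have hle : ((C a * X : Polynomial A)).natDegree ≤ 1 :=
      (Polynomial.natDegree_C_mul_le a X).trans (by simp)
    rw [hq] at hle
    rw [hdeg] at hle
    omega
  · intro φ _
    have hnil : (Ideal.Quotient.mk (Ideal.span {(X ^ n + C a₀ : Polynomial A)}) (C a * X)) ^ n = 0 := by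
      rw [← map_pow, Ideal.Quotient.eq_zero_iff_mem]
      have : (C a * X : Polynomial A) ^ n = C (a ^ n) * (X ^ n + C a₀) - C (a ^ n * a₀) := by
        rw [C_mul, mul_pow, ← C_pow]; ring
      rw [this]
      have hz : a ^ n * a₀ = 0 := by
        have : a ^ n * a₀ = a ^ (n - 1) * (a * a₀) := by
          rw [← mul_assoc, ← pow_succ]
          congr 2
          omega
        rw [this, hzd, mul_zero]
      rw [hz, map_zero, sub_zero]
      exact Ideal.mem_span_singleton.mpr ⟨C (a ^ n), mul_comm _ _⟩
    have : φ (Ideal.Quotient.mk (Ideal.span {(X ^ n + C a₀ : Polynomial A)}) (C a * X)) ^ n = 0 := by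
      rw [← map_pow, hnil, map_zero]
    have hn0 : n ≠ 0 := by omega
    exact pow_eq_zero_iff hn0 |>.mp this
end

section
/- Under the hypotheses of the universal property of Arens-Hoffman extensions, if A₁, A₂, B₂ are normed, B₁ = A₁[x]/(α₁(x)) carries an Arens-Hoffman norm, and θ and φ₀ are continuous, then the induced homomorphism φ : B₁ → B₂ is continuous, with ‖φ(β(x̄))‖ ≤ M Σ_{k<n} ‖b_k‖ t^k where M = ‖θ∘φ₀‖ · max_{0≤k<n} (‖y‖/t)^k. -/
open Polynomial

/-- The quotient of `A₁[x]` by `(α₁)`; every element is `β(x̄)` for a unique `β` of degree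
`< n = deg α₁`, and the Arens–Hoffman norm of `β(x̄)` is `Σ_{k<n} ‖b_k‖ t^k`.  Continuity of
the induced homomorphism in the universal property of Arens–Hoffman extensions:
if `A₁, A₂, B₂` are normed, `B₁ = A₁[x]/(α₁(x))` carries an Arens–Hoffman norm of parameter
`t`, and `θ` and `φ₀` are continuous, then the induced homomorphism `φ : B₁ → B₂`
(determined by `φ∘ν′ = θ∘φ₀` and `φ(x̄) = y`) is continuous, with
`‖φ(β(x̄))‖ ≤ M · Σ_{k<n} ‖b_k‖ t^k` where `M = ‖θ∘φ₀‖ · max_{0≤k<n} (‖y‖/t)^k`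
(here `Cθ` is any bound for the operator norm of `θ∘φ₀`). -/
theorem arensHoffman_universal_property_continuous {A₁ A₂ B₂ : Type*}
    [NormedCommRing A₁] [NormedAlgebra ℂ A₁] [NormOneClass A₁]
    [NormedCommRing A₂] [NormedAlgebra ℂ A₂] [NormOneClass A₂]
    [NormedCommRing B₂] [NormedAlgebra ℂ B₂] [NormOneClass B₂]
    (θ : A₂ →ₐ[ℂ] B₂) (hθ : Function.Injective θ) (hθc : Continuous θ)
    (φ₀ : A₁ →ₐ[ℂ] A₂) (hφ₀c : Continuous φ₀)
    (α₁ : Polynomial A₁) (hα : α₁.Monic) (hdeg : 0 < α₁.natDegree)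
    (y : B₂) (hy : Polynomial.eval₂ ((θ.comp φ₀ : A₁ →ₐ[ℂ] B₂) : A₁ →+* B₂) y α₁ = 0)
    (t : ℝ) (ht : 0 < t)
    (hparam : ∑ k ∈ Finset.range α₁.natDegree, ‖α₁.coeff k‖ * t ^ k ≤ t ^ α₁.natDegree)
    (Cθ : ℝ) (hCθ : ∀ a : A₁, ‖θ (φ₀ a)‖ ≤ Cθ * ‖a‖)
    (φ : (Polynomial A₁ ⧸ Ideal.span {α₁}) →ₐ[ℂ] B₂)
    (hφconst : ∀ a : A₁,
      φ (Ideal.Quotient.mk (Ideal.span {α₁}) (Polynomial.C a)) = θ (φ₀ a))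
    (hφX : φ (Ideal.Quotient.mk (Ideal.span {α₁}) Polynomial.X) = y) :
    ∀ β : Polynomial A₁, β.natDegree < α₁.natDegree →
      ‖φ (Ideal.Quotient.mk (Ideal.span {α₁}) β)‖ ≤
        (Cθ * (Finset.range α₁.natDegree).sup'
            (Finset.nonempty_range_iff.mpr hdeg.ne') (fun k => (‖y‖ / t) ^ k)) *
          ∑ k ∈ Finset.range α₁.natDegree, ‖β.coeff k‖ * t ^ k := by
  intro β hβ
  set n := α₁.natDegree with hn
  set S := (Finset.range n).sup' (Finset.nonempty_range_iff.mpr hdeg.ne')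
      (fun k => (‖y‖ / t) ^ k) with hS
  have hCθ0 : 0 ≤ Cθ := by
    have h1 := hCθ 1
    simp only [map_one, norm_one, mul_one] at h1
    linarith
  have hrep : β = ∑ k ∈ Finset.range n, Polynomial.C (β.coeff k) * Polynomial.X ^ k := by
    conv_lhs => rw [Polynomial.as_sum_range' β n hβ]
    simp [Polynomial.C_mul_X_pow_eq_monomial]
  have hval : φ (Ideal.Quotient.mk (Ideal.span {α₁}) β)
      = ∑ k ∈ Finset.range n, θ (φ₀ (β.coeff k)) * y ^ k := by
    conv_lhs => rw [hrep]
    rw [map_sum, map_sum]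
    refine Finset.sum_congr rfl fun k _ => ?_
    rw [map_mul, map_mul, map_pow, map_pow, hφconst, hφX]
  rw [hval, Finset.mul_sum]
  refine le_trans (norm_sum_le _ _) (Finset.sum_le_sum fun k hk => ?_)
  have h1 : ‖θ (φ₀ (β.coeff k)) * y ^ k‖ ≤ Cθ * ‖β.coeff k‖ * ‖y‖ ^ k :=
    calc ‖θ (φ₀ (β.coeff k)) * y ^ k‖ ≤ ‖θ (φ₀ (β.coeff k))‖ * ‖y ^ k‖ := norm_mul_le _ _
    _ ≤ (Cθ * ‖β.coeff k‖) * ‖y‖ ^ k :=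
        mul_le_mul (hCθ _) (norm_pow_le _ _) (norm_nonneg _) (by positivity)
  have hyk : ‖y‖ ^ k = (‖y‖ / t) ^ k * t ^ k := by
    rw [div_pow, div_mul_cancel₀]
    positivity
  have hSk : (‖y‖ / t) ^ k ≤ S := Finset.le_sup' _ hk
  calc ‖θ (φ₀ (β.coeff k)) * y ^ k‖ ≤ Cθ * ‖β.coeff k‖ * ((‖y‖ / t) ^ k * t ^ k) := by
        rw [← hyk]; exact h1
  _ ≤ Cθ * ‖β.coeff k‖ * (S * t ^ k) := by gcongr
  _ = Cθ * S * (‖β.coeff k‖ * t ^ k) := by ring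
end

section
/- Let (A, X) be a uniform algebra and 𝔘 a nonempty set of monic polynomials over A. Define Y = X × ℂ^𝔘 and X^𝔘 = {(κ, λ) ∈ Y : for all α ∈ 𝔘, f₀^{(α)}(κ) + ... + f_{n(α)-1}^{(α)}(κ)λ_α^{n(α)-1} + λ_α^{n(α)} = 0}. Then X^𝔘 is a nonempty compact Hausdorff space, and the closed subalgebra A^𝔘 of C(X^𝔘) generated by {f∘π : f ∈ A} ∪ {p_α : α ∈ 𝔘} (where π, p_α are the coordinate projections restricted to X^𝔘) is a uniform algebra on X^𝔘 into which A embeds isometrically via f ↦ f∘π, and each p_α is a root of the corresponding polynomial. -/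
open Polynomial

variable {X : Type*} [TopologicalSpace X] [CompactSpace X] [T2Space X]

/-- Cole's root space `X^𝔘 ⊆ Y = X × ℂ^𝔘`: the set of pairs `(κ, λ)` such that for every
`α ∈ 𝔘` (a monic polynomial with coefficients in `C(X, ℂ)`),
`f₀^{(α)}(κ) + ⋯ + f_{n(α)-1}^{(α)}(κ) λ_α^{n(α)-1} + λ_α^{n(α)} = 0`. -/
def coleSpace (U : Set (Polynomial C(X, ℂ))) : Set (X × (U → ℂ)) :=
  {y | ∀ α : U, ∑ k ∈ Finset.range ((α : Polynomial C(X, ℂ)).natDegree + 1),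
      ((α : Polynomial C(X, ℂ)).coeff k) y.1 * y.2 α ^ k = 0}

/-- The pullback `π* f = f ∘ π` of `f ∈ C(X, ℂ)` along the projection
`π : X^𝔘 → X`. -/
noncomputable def colePullback (U : Set (Polynomial C(X, ℂ))) (f : C(X, ℂ)) : C(coleSpace U, ℂ) :=
  f.comp ⟨fun y => (y : X × (U → ℂ)).1, continuous_fst.comp continuous_subtype_val⟩

/-- The coordinate projection `p_α : X^𝔘 → ℂ`, `(κ, λ) ↦ λ_α`. -/
def coleProj (U : Set (Polynomial C(X, ℂ))) (α : U) : C(coleSpace U, ℂ) :=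
  ⟨fun y => (y : X × (U → ℂ)).2 α,
    (continuous_apply α).comp (continuous_snd.comp continuous_subtype_val)⟩

/-- Root norm bound: a root of a monic polynomial (given as a vanishing sum with top
coefficient `1`) has norm at most `max 1 (Σ ‖c_k‖)` where the `c_k` are bounded by `B k`. -/
lemma cole_root_bound (n : ℕ) (hn : 0 < n) (c : ℕ → ℂ) (hc : c n = 1) {z : ℂ}
    (h : ∑ k ∈ Finset.range (n + 1), c k * z ^ k = 0) (B : ℕ → ℝ)
    (hB : ∀ k, ‖c k‖ ≤ B k) :
    ‖z‖ ≤ max 1 (∑ k ∈ Finset.range n, B k) := by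
  by_cases h1 : ‖z‖ ≤ 1
  · exact le_trans h1 (le_max_left _ _)
  push_neg at h1
  refine le_trans ?_ (le_max_right _ _)
  rw [Finset.sum_range_succ, hc, one_mul, add_eq_zero_iff_eq_neg] at h
  have hzpos : (0 : ℝ) < ‖z‖ := lt_trans one_pos h1
  have key : ‖z‖ ^ n ≤ (∑ k ∈ Finset.range n, B k) * ‖z‖ ^ (n - 1) := by
    calc ‖z‖ ^ n = ‖z ^ n‖ := (norm_pow z n).symm
      _ = ‖∑ k ∈ Finset.range n, c k * z ^ k‖ := by rw [h, norm_neg]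
      _ ≤ ∑ k ∈ Finset.range n, ‖c k * z ^ k‖ := norm_sum_le _ _
      _ ≤ ∑ k ∈ Finset.range n, B k * ‖z‖ ^ (n - 1) := by
          refine Finset.sum_le_sum fun k hk => ?_
          rw [norm_mul, norm_pow]
          refine mul_le_mul (hB k) (pow_le_pow_right₀ (le_of_lt h1) ?_)
            (pow_nonneg (norm_nonneg z) k) ((norm_nonneg _).trans (hB k))
          have := Finset.mem_range.mp hk; omega
      _ = (∑ k ∈ Finset.range n, B k) * ‖z‖ ^ (n - 1) := (Finset.sum_mul _ _ _).symm
  have hpow : ‖z‖ ^ n = ‖z‖ * ‖z‖ ^ (n - 1) := by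
    conv_lhs => rw [show n = (n - 1) + 1 by omega]
    rw [pow_succ, mul_comm]
  rw [hpow] at key
  exact le_of_mul_le_mul_right key (pow_pos hzpos _)

/-- The projection `X^𝔘 → X` is surjective: for each `κ` there is a root tuple. -/
lemma cole_exists_fiber (U : Set (Polynomial C(X, ℂ)))
    (hmonic : ∀ α ∈ U, Polynomial.Monic α) (hdeg : ∀ α ∈ U, 0 < Polynomial.natDegree α)
    (κ : X) : ∃ lam : U → ℂ, (κ, lam) ∈ coleSpace U := by
  have hex : ∀ α : U, ∃ z : ℂ,
      ∑ k ∈ Finset.range ((α : Polynomial C(X, ℂ)).natDegree + 1),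
        ((α : Polynomial C(X, ℂ)).coeff k) κ * z ^ k = 0 := by
    intro α
    set φ : C(X, ℂ) →+* ℂ := (ContinuousMap.evalAlgHom ℂ ℂ κ).toRingHom with hφ
    set q : ℂ[X] := (α : Polynomial C(X, ℂ)).map φ with hq
    have hqd : q.natDegree = (α : Polynomial C(X, ℂ)).natDegree :=
      (hmonic α α.2).natDegree_map φ
    have hq0 : 0 < q.degree :=
      Polynomial.natDegree_pos_iff_degree_pos.mp (hqd ▸ hdeg α α.2)
    obtain ⟨z, hz⟩ := Complex.exists_root hq0
    refine ⟨z, ?_⟩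
    rw [IsRoot.def, eval_eq_sum_range, hqd] at hz
    rw [← hz]
    exact Finset.sum_congr rfl fun k _ => by rw [hq, Polynomial.coeff_map]; rfl
  choose lam hlam using hex
  exact ⟨lam, fun α => hlam α⟩

/-- `X^𝔘` is closed in `Y = X × ℂ^𝔘`. -/
lemma coleSpace_isClosed (U : Set (Polynomial C(X, ℂ))) : IsClosed (coleSpace U) := by
  have : coleSpace U = ⋂ α : U,
      (fun y : X × (U → ℂ) => ∑ k ∈ Finset.range ((α : Polynomial C(X, ℂ)).natDegree + 1),
        ((α : Polynomial C(X, ℂ)).coeff k) y.1 * y.2 α ^ k) ⁻¹' {0} := by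
    ext y; simp [coleSpace, Set.mem_iInter]
  rw [this]
  refine isClosed_iInter fun α => IsClosed.preimage ?_ isClosed_singleton
  refine continuous_finset_sum _ fun k _ => Continuous.mul ?_ ?_
  · exact ((α : Polynomial C(X, ℂ)).coeff k).continuous.comp continuous_fst
  · exact ((continuous_apply α).comp continuous_snd).pow k

/-- **Cole's construction.**  Let `(A, X)` be a uniform algebra (a closed, point-separating
subalgebra of `C(X, ℂ)` on the nonempty compact Hausdorff space `X`) and `𝔘` a nonempty set
of monic (nonconstant) polynomials over `A`.  With `Y = X × ℂ^𝔘` and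
`X^𝔘 = {(κ, λ) ∈ Y : ∀ α ∈ 𝔘, Σ_k f_k^{(α)}(κ) λ_α^k = 0}`:  `X^𝔘` is a nonempty compact
Hausdorff space; the closed subalgebra `A^𝔘` of `C(X^𝔘)` generated by
`{f∘π : f ∈ A} ∪ {p_α : α ∈ 𝔘}` is a uniform algebra on `X^𝔘` (closed, contains the
constants, separates points); `A` embeds isometrically via `f ↦ f∘π`; and each `p_α` is a
root of the corresponding polynomial. -/
theorem cole_construction (hX : Nonempty X) (A : Subalgebra ℂ C(X, ℂ))
    (hAclosed : IsClosed (A : Set C(X, ℂ)))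
    (hAsep : ∀ x₁ x₂ : X, x₁ ≠ x₂ → ∃ f ∈ A, f x₁ ≠ f x₂)
    (U : Set (Polynomial C(X, ℂ))) (hU : U.Nonempty)
    (hmonic : ∀ α ∈ U, Polynomial.Monic α)
    (hcoeff : ∀ α ∈ U, ∀ k : ℕ, Polynomial.coeff α k ∈ A)
    (hdeg : ∀ α ∈ U, 0 < Polynomial.natDegree α) :
    -- `X^𝔘` is a nonempty compact Hausdorff space
    (coleSpace U).Nonempty ∧ IsCompact (coleSpace U) ∧ T2Space (coleSpace U) ∧
    ∃ AU : Subalgebra ℂ C(coleSpace U, ℂ),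
      -- `A^𝔘` is the closed subalgebra generated by `π*(A) ∪ {p_α : α ∈ 𝔘}`
      (AU : Set C(coleSpace U, ℂ)) =
        closure (Algebra.adjoin ℂ
          (colePullback U '' (A : Set C(X, ℂ)) ∪ Set.range (coleProj U)) :
            Set C(coleSpace U, ℂ)) ∧
      IsClosed (AU : Set C(coleSpace U, ℂ)) ∧
      -- `A^𝔘` separates the points of `X^𝔘`
      (∀ y₁ y₂ : coleSpace U, y₁ ≠ y₂ → ∃ g ∈ AU, g y₁ ≠ g y₂) ∧
      -- `π*` is an isometric embedding of `A` into `A^𝔘`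
      (∀ f : C(X, ℂ), f ∈ A → colePullback U f ∈ AU ∧
        (⨆ y : coleSpace U, ‖f (y : X × (U → ℂ)).1‖) = ‖f‖) ∧
      -- each `p_α` belongs to `A^𝔘` and is a root of (the pullback of) `α`
      (∀ α : U, coleProj U α ∈ AU ∧
        ∑ k ∈ Finset.range ((α : Polynomial C(X, ℂ)).natDegree + 1),
          (colePullback U ((α : Polynomial C(X, ℂ)).coeff k)) * coleProj U α ^ k = 0) := by
  classical
  haveI := hX
  -- surjectivity of the projection
  have hfiber := cole_exists_fiber U hmonic hdeg
  -- nonemptiness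
  obtain ⟨κ₀⟩ := hX
  obtain ⟨lam₀, hlam₀⟩ := hfiber κ₀
  have hne : (coleSpace U).Nonempty := ⟨(κ₀, lam₀), hlam₀⟩
  -- compactness
  have hcpt : IsCompact (coleSpace U) := by
    set M : U → ℝ := fun α => max 1
      (∑ k ∈ Finset.range (α : Polynomial C(X, ℂ)).natDegree,
        ‖(α : Polynomial C(X, ℂ)).coeff k‖) with hM
    have hsub : coleSpace U ⊆
        (Set.univ : Set X) ×ˢ Set.univ.pi fun α : U => Metric.closedBall (0 : ℂ) (M α) := by
      rintro ⟨κ, lam⟩ hy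
      refine ⟨trivial, fun α _ => ?_⟩
      simp only [Metric.mem_closedBall, Complex.dist_eq, sub_zero]
      refine cole_root_bound ((α : Polynomial C(X, ℂ)).natDegree)
        (hdeg α α.2) (fun k => ((α : Polynomial C(X, ℂ)).coeff k) κ) ?_ (hy α)
        (fun k => ‖(α : Polynomial C(X, ℂ)).coeff k‖)
        (fun k => ContinuousMap.norm_coe_le_norm _ κ)
      show ((α : Polynomial C(X, ℂ)).coeff (α : Polynomial C(X, ℂ)).natDegree) κ = 1
      rw [(hmonic α α.2).coeff_natDegree]; rfl
    exact IsCompact.of_isClosed_subset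
      (isCompact_univ.prod (isCompact_univ_pi fun α => isCompact_closedBall _ _))
      (coleSpace_isClosed U) hsub
  haveI : CompactSpace (coleSpace U) := isCompact_iff_compactSpace.mp hcpt
  haveI : Nonempty (coleSpace U) := hne.to_subtype
  refine ⟨hne, hcpt, inferInstance, ?_⟩
  set S : Set C(coleSpace U, ℂ) :=
    colePullback U '' (A : Set C(X, ℂ)) ∪ Set.range (coleProj U) with hS
  refine ⟨(Algebra.adjoin ℂ S).topologicalClosure,
    (Subalgebra.topologicalClosure_coe _), ?_, ?_, ?_, ?_⟩
  · rw [Subalgebra.topologicalClosure_coe]; exact isClosed_closure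
  · -- separation
    rintro y₁ y₂ hy
    have hv : (y₁ : X × (U → ℂ)) ≠ (y₂ : X × (U → ℂ)) := Subtype.coe_injective.ne hy
    by_cases h1 : (y₁ : X × (U → ℂ)).1 = (y₂ : X × (U → ℂ)).1
    · have h2 : (y₁ : X × (U → ℂ)).2 ≠ (y₂ : X × (U → ℂ)).2 := by
        intro h2; exact hv (Prod.ext h1 h2)
      obtain ⟨α, hα⟩ := Function.ne_iff.mp h2
      exact ⟨coleProj U α,
        Subalgebra.le_topologicalClosure _ (Algebra.subset_adjoin (Or.inr ⟨α, rfl⟩)), hα⟩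
    · obtain ⟨f, hfA, hf⟩ := hAsep _ _ h1
      exact ⟨colePullback U f,
        Subalgebra.le_topologicalClosure _ (Algebra.subset_adjoin (Or.inl ⟨f, hfA, rfl⟩)), hf⟩
  · -- isometric embedding
    intro f hfA
    refine ⟨Subalgebra.le_topologicalClosure _ (Algebra.subset_adjoin (Or.inl ⟨f, hfA, rfl⟩)), ?_⟩
    refine le_antisymm (ciSup_le fun y => ContinuousMap.norm_coe_le_norm f _) ?_
    rw [ContinuousMap.norm_eq_iSup_norm]
    refine ciSup_le fun x => ?_
    obtain ⟨lam, hlam⟩ := hfiber x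
    refine le_ciSup_of_le ⟨‖f‖, ?_⟩ (⟨(x, lam), hlam⟩ : coleSpace U) le_rfl
    rintro r ⟨y, rfl⟩
    exact ContinuousMap.norm_coe_le_norm f _
  · -- the roots
    intro α
    refine ⟨Subalgebra.le_topologicalClosure _ (Algebra.subset_adjoin (Or.inr ⟨α, rfl⟩)), ?_⟩
    ext y
    have hy := y.2 α
    simpa [colePullback, coleProj] using hy
end

section
/- Let B₁ be a commutative semisimple complex unital Banach algebra and B₂ a uniform algebra, and suppose T : B₁ → B₂ is an algebra isomorphism. Then the Gelfand transform of B₁ is a topological isomorphism onto its image; in particular the image B̂₁ of the Gelfand transform is complete in the supremum norm. -/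
set_option maxHeartbeats 1000000
set_option synthInstance.maxHeartbeats 1000000

open WeakDual

/-- Let `B₁` be a commutative semisimple complex unital Banach algebra and `B₂` a uniform
algebra (a closed point-separating subalgebra of `C(Y, ℂ)` on a compact Hausdorff space
`Y`), and suppose `T : B₁ → B₂` is an algebra isomorphism.  Then the Gelfand transform of
`B₁` is a topological isomorphism onto its image (it is bounded above and below); in
particular the image `B̂₁` of the Gelfand transform is complete (closed) in the supremum
norm. -/
theorem gelfand_topological_iso_of_iso_with_uniform_algebra
    {B₁ : Type*} [NormedCommRing B₁] [NormedAlgebra ℂ B₁] [NormOneClass B₁]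
    [CompleteSpace B₁]
    (hsemi : (⊥ : Ideal B₁).jacobson = ⊥)
    {Y : Type*} [TopologicalSpace Y] [CompactSpace Y] [T2Space Y]
    (B₂ : Subalgebra ℂ C(Y, ℂ)) (hclosed : IsClosed (B₂ : Set C(Y, ℂ)))
    (hsep : ∀ y₁ y₂ : Y, y₁ ≠ y₂ → ∃ f ∈ B₂, f y₁ ≠ f y₂)
    (T : B₁ ≃ₐ[ℂ] B₂) :
    (∃ c₁ > (0 : ℝ), ∃ c₂ > (0 : ℝ), ∀ b : B₁,
      c₁ * ‖b‖ ≤ ‖gelfandTransform ℂ B₁ b‖ ∧ ‖gelfandTransform ℂ B₁ b‖ ≤ c₂ * ‖b‖) ∧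
    IsClosed (Set.range (gelfandTransform ℂ B₁) : Set C(characterSpace ℂ B₁, ℂ)) := by
  haveI : CompleteSpace B₂ := hclosed.completeSpace_coe
  -- Semisimplicity: characters separate the points of `B₁`.
  have hinj : ∀ b : B₁, (∀ χ : characterSpace ℂ B₁, χ b = 0) → b = 0 := by
    intro b hb
    have hmem : b ∈ (⊥ : Ideal B₁).jacobson := by
      rw [Ideal.jacobson]
      refine Ideal.mem_sInf.mpr ?_
      rintro M ⟨-, hM⟩
      by_contra hbM
      obtain ⟨z, i, hiM, hz⟩ := hM.exists_inv hbM
      have := congrArg (M.toCharacterSpace) hz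
      rw [map_add, map_mul, map_one, hb M.toCharacterSpace,
        M.toCharacterSpace_apply_eq_zero_of_mem hiM, mul_zero, zero_add] at this
      exact zero_ne_one this
    rwa [hsemi, Ideal.mem_bot] at hmem
  -- Every character is contractive.
  have hchar : ∀ (χ : characterSpace ℂ B₁) (b : B₁), ‖χ b‖ ≤ ‖b‖ := fun χ b =>
    spectrum.norm_le_norm_of_mem (AlgHom.apply_mem_spectrum χ b)
  -- Upper bound for the Gelfand transform.
  have hupper : ∀ b : B₁, ‖gelfandTransform ℂ B₁ b‖ ≤ ‖b‖ := by
    intro b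
    refine (ContinuousMap.norm_le _ (norm_nonneg b)).mpr fun χ => ?_
    simpa using hchar χ b
  -- `‖T b‖ ≤ ‖gelfandTransform b‖` since evaluations at points of `Y` give characters of `B₁`.
  have hTle : ∀ b : B₁, ‖(T b : C(Y, ℂ))‖ ≤ ‖gelfandTransform ℂ B₁ b‖ := by
    intro b
    refine (ContinuousMap.norm_le _ (norm_nonneg _)).mpr fun y => ?_
    let φ : B₁ →ₐ[ℂ] ℂ :=
      ((ContinuousMap.evalAlgHom (S := ℂ) (R := ℂ) y).comp B₂.val).comp T.toAlgHom
    let χ : characterSpace ℂ B₁ := CharacterSpace.equivAlgHom.symm φ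
    have h1 : (T b : C(Y, ℂ)) y = χ b := by
      simp [χ, CharacterSpace.equivAlgHom_symm_coe, φ]
    have h2 : χ b = (gelfandTransform ℂ B₁ b) χ := by simp
    rw [h1, h2]
    exact ContinuousMap.norm_coe_le_norm _ _
  -- `T.symm` is continuous by the closed graph theorem (using semisimplicity).
  let S : B₂ →ₗ[ℂ] B₁ := T.symm.toLinearMap
  have hScont : Continuous S := by
    refine S.continuous_of_seq_closed_graph ?_
    intro u x y hux huy
    refine sub_eq_zero.mp (hinj (y - T.symm x) fun χ => ?_)
    rw [map_sub, sub_eq_zero]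
    let ψ : characterSpace ℂ B₂ :=
      CharacterSpace.equivAlgHom.symm ((CharacterSpace.toAlgHom χ).comp T.symm.toAlgHom)
    have hψ : ∀ f : B₂, ψ f = χ (T.symm f) := fun f => by
      simp [ψ, CharacterSpace.equivAlgHom_symm_coe]
    have l1 : Filter.Tendsto (fun n => χ (T.symm (u n))) Filter.atTop (nhds (χ y)) :=
      ((map_continuous χ).tendsto y).comp huy
    have l2 : Filter.Tendsto (fun n => χ (T.symm (u n))) Filter.atTop (nhds (χ (T.symm x))) := by
      have := ((map_continuous ψ).tendsto x).comp hux
      simpa [hψ, Function.comp_def] using this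
    exact tendsto_nhds_unique l1 l2
  let S' : B₂ →L[ℂ] B₁ := ⟨S, hScont⟩
  set M : ℝ := max ‖S'‖ 1 with hM
  have hMpos : (0 : ℝ) < M := lt_of_lt_of_le one_pos (le_max_right _ _)
  -- lower bound: `‖b‖ ≤ M * ‖gelfandTransform b‖`
  have hlower : ∀ b : B₁, ‖b‖ ≤ M * ‖gelfandTransform ℂ B₁ b‖ := by
    intro b
    have h1 : ‖b‖ = ‖S' (T b)‖ := by simp [S', S]
    calc ‖b‖ = ‖S' (T b)‖ := h1
      _ ≤ ‖S'‖ * ‖T b‖ := S'.le_opNorm _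
      _ ≤ M * ‖gelfandTransform ℂ B₁ b‖ := by
          have : ‖T b‖ ≤ ‖gelfandTransform ℂ B₁ b‖ := hTle b
          have h0 : (0 : ℝ) ≤ ‖S'‖ := ContinuousLinearMap.opNorm_nonneg _
          nlinarith [norm_nonneg (T b), le_max_left ‖S'‖ 1,
            norm_nonneg (gelfandTransform ℂ B₁ b)]
  constructor
  · refine ⟨M⁻¹, inv_pos.mpr hMpos, 1, one_pos, fun b => ?_⟩
    refine ⟨?_, by simpa using hupper b⟩
    rw [inv_mul_le_iff₀ hMpos]
    exact hlower b
  · -- the range is closed: the Gelfand transform is bi-Lipschitz onto its range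
    have hlip : LipschitzWith 1 (gelfandTransform ℂ B₁) := by
      refine LipschitzWith.of_dist_le_mul fun a b => ?_
      rw [dist_eq_norm, dist_eq_norm, ← map_sub]
      simpa using hupper (a - b)
    have hanti : AntilipschitzWith M.toNNReal (gelfandTransform ℂ B₁) := by
      refine AntilipschitzWith.of_le_mul_dist fun a b => ?_
      rw [dist_eq_norm, dist_eq_norm, ← map_sub]
      calc ‖a - b‖ ≤ M * ‖gelfandTransform ℂ B₁ (a - b)‖ := hlower _
        _ = (M.toNNReal : ℝ) * ‖gelfandTransform ℂ B₁ (a - b)‖ := by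
            rw [Real.coe_toNNReal _ hMpos.le]
    exact hanti.isClosed_range hlip.uniformContinuous
end
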